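/- arXiv:1509.03177 — 4 statements merged into one kernel-verified Lean document; each statement's English description precedes it below -/
import Mathlib

section
/- Define b_{m,n} = 1 + (F_{m-1}·n + F_{m-2})/(F_m·n + F_{m-1}) and a_{0,n} = 1, a_{m,n} = a_{m-1,n}·b_{(m-1)/2, n} if m is odd, a_{m,n} = a_{m-1,n}·b_{m/2 - 1, n} if m is even. Then a_{m,n} = (F_{(m-1)/2}·n + F_{(m-1)/2 - 1})(F_{(m+1)/2}·n + F_{(m-1)/2}) when m is odd, and a_{m,n} = (F_{m/2}·n + F_{m/2 - 1})² when m is even, for all m ≥ 0 and positive integers n. -/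
/-!
Write `G k = F k * n + F (k - 1)`. Since `G` inherits the Fibonacci recurrence,
`b k = 1 + G (k - 1) / G k = G (k + 1) / G k`, so each `b k` is applied twice in a row and the
products telescope: `a (2k) = G k ^ 2` and `a (2k + 1) = G k * G (k + 1)`.
-/

section FibLinear

variable {R : Type*} [CommRing R] {F : ℤ → ℤ}

def fibLinear (F : ℤ → ℤ) (x : R) (k : ℤ) : R := F k * x + F (k - 1)

lemma fibLinear_add_one (hrec : ∀ k, F (k + 1) = F k + F (k - 1)) (x : R) (k : ℤ) :
    fibLinear F x (k + 1) = fibLinear F x k + fibLinear F x (k - 1) := by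
  have hk := hrec (k - 1)
  rw [sub_add_cancel, sub_sub, one_add_one_eq_two] at hk
  simp only [fibLinear, add_sub_cancel_right, hrec k, hk, sub_sub, one_add_one_eq_two]
  push_cast
  ring

lemma one_add_fibLinear_div {K : Type*} [Field K] (hrec : ∀ k, F (k + 1) = F k + F (k - 1))
    (x : K) {k : ℤ} (hk : fibLinear F x k ≠ 0) :
    1 + fibLinear F x (k - 1) / fibLinear F x k = fibLinear F x (k + 1) / fibLinear F x k := by
  rw [fibLinear_add_one hrec, one_add_div hk]

end FibLinear

lemma apply_neg_one_eq_one_of_fib_rec {F : ℤ → ℤ} (h0 : F 0 = 0) (h1 : F 1 = 1)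
    (hrec : ∀ k, F (k + 1) = F k + F (k - 1)) : F (-1) = 1 := by
  have h := hrec 0
  rw [zero_add, zero_sub, h0, h1, zero_add] at h
  exact h.symm

lemma eq_sq_and_eq_mul_of_double_ratio_steps {K : Type*} [Field K] {a g : ℕ → K}
    (hg : ∀ k, g k ≠ 0) (h0 : a 0 = g 0 ^ 2)
    (hodd : ∀ k, a (2 * k + 1) = a (2 * k) * (g (k + 1) / g k))
    (heven : ∀ k, a (2 * k + 2) = a (2 * k + 1) * (g (k + 1) / g k)) (k : ℕ) :
    a (2 * k) = g k ^ 2 ∧ a (2 * k + 1) = g k * g (k + 1) := by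
  have step : ∀ k, a (2 * k) = g k ^ 2 → a (2 * k + 1) = g k * g (k + 1) := fun k hk ↦ by
    rw [hodd, hk]
    field_simp [hg k]
  induction k with
  | zero => exact ⟨h0, step 0 h0⟩
  | succ k ih =>
    have hsq : a (2 * (k + 1)) = g (k + 1) ^ 2 := by
      rw [mul_add, mul_one, heven, ih.2]
      field_simp [hg k]
    exact ⟨hsq, step (k + 1) hsq⟩

theorem fiboquadratic_explicit_general
    (F : ℤ → ℤ) (h0 : F 0 = 0) (h1 : F 1 = 1)
    (hrec : ∀ k : ℤ, F (k + 1) = F k + F (k - 1))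
    (n : ℕ)
    (b : ℤ → ℚ)
    (hbden : ∀ m : ℤ, 0 ≤ m → (F m * n + F (m - 1) : ℚ) ≠ 0)
    (hb : ∀ m : ℤ, b m = 1 + ((F (m - 1) : ℚ) * n + (F (m - 2) : ℚ)) /
        ((F m : ℚ) * n + (F (m - 1) : ℚ)))
    (a : ℕ → ℚ) (ha0 : a 0 = 1)
    (haodd : ∀ m : ℕ, Odd m → a m = a (m - 1) * b (((m : ℤ) - 1) / 2))
    (haeven : ∀ m : ℕ, Even m → m ≠ 0 → a m = a (m - 1) * b ((m : ℤ) / 2 - 1)) :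
    ∀ m : ℕ,
      (Odd m → a m = ((F (((m : ℤ) - 1) / 2) : ℚ) * n + (F (((m : ℤ) - 1) / 2 - 1) : ℚ)) *
          ((F (((m : ℤ) - 1) / 2 + 1) : ℚ) * n + (F (((m : ℤ) - 1) / 2) : ℚ))) ∧
      (Even m → a m = ((F ((m : ℤ) / 2) : ℚ) * n + (F ((m : ℤ) / 2 - 1) : ℚ)) ^ 2) := by
  set g : ℕ → ℚ := fun k ↦ fibLinear F (n : ℚ) k
  have hb_ratio : ∀ k : ℕ, b k = g (k + 1) / g k := fun k ↦ by
    have h := one_add_fibLinear_div hrec (n : ℚ) (hbden k k.cast_nonneg)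
    rw [fibLinear, sub_sub, one_add_one_eq_two] at h
    rw [hb]
    push_cast [g]
    exact h
  have key := eq_sq_and_eq_mul_of_double_ratio_steps (a := a) (g := g)
    (fun k ↦ hbden k k.cast_nonneg)
    (by simp [g, fibLinear, ha0, h0, apply_neg_one_eq_one_of_fib_rec h0 h1 hrec])
    (fun k ↦ by
      rw [haodd _ (odd_two_mul_add_one k), ← hb_ratio]
      congr 2; omega)
    (fun k ↦ by
      rw [haeven _ ⟨k + 1, by ring⟩ (by omega), ← hb_ratio]
      congr 2; omega)
  intro m
  obtain ⟨k, rfl | rfl⟩ := Nat.even_or_odd' m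
  · refine ⟨fun h ↦ absurd h (Nat.not_odd_iff_even.2 (even_two_mul k)), fun _ ↦ ?_⟩
    have hk : ((2 * k : ℕ) : ℤ) / 2 = k := by omega
    simpa [hk, g, fibLinear] using (key k).1
  · refine ⟨fun _ ↦ ?_, fun h ↦ absurd h (Nat.not_even_iff_odd.2 (odd_two_mul_add_one k))⟩
    have hk : (((2 * k + 1 : ℕ) : ℤ) - 1) / 2 = k := by omega
    simpa [hk, g, fibLinear] using (key k).2

theorem fiboquadratic_explicit
    (F : ℤ → ℤ) (h0 : F 0 = 0) (h1 : F 1 = 1)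
    (hrec : ∀ k : ℤ, F (k + 1) = F k + F (k - 1))
    (n : ℕ) (hn : 1 ≤ n)
    (b : ℤ → ℚ)
    (hbden : ∀ m : ℤ, 0 ≤ m → (F m * n + F (m - 1) : ℚ) ≠ 0)
    (hb : ∀ m : ℤ, b m = 1 + ((F (m - 1) : ℚ) * n + (F (m - 2) : ℚ)) /
        ((F m : ℚ) * n + (F (m - 1) : ℚ)))
    (a : ℕ → ℚ) (ha0 : a 0 = 1)
    (haodd : ∀ m : ℕ, Odd m → a m = a (m - 1) * b (((m : ℤ) - 1) / 2))
    (haeven : ∀ m : ℕ, Even m → m ≠ 0 → a m = a (m - 1) * b ((m : ℤ) / 2 - 1)) :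
    ∀ m : ℕ,
      (Odd m → a m = ((F (((m : ℤ) - 1) / 2) : ℚ) * n + (F (((m : ℤ) - 1) / 2 - 1) : ℚ)) *
          ((F (((m : ℤ) - 1) / 2 + 1) : ℚ) * n + (F (((m : ℤ) - 1) / 2) : ℚ))) ∧
      (Even m → a m = ((F ((m : ℤ) / 2) : ℚ) * n + (F ((m : ℤ) / 2 - 1) : ℚ)) ^ 2) :=
  fiboquadratic_explicit_general F h0 h1 hrec n b hbden hb a ha0 haodd haeven
end

section
/- For any fixed natural number n ≥ 1, the sequence of quotients of successive terms of the fiboquadratic sequence generated by n converges to the golden ratio: lim_{m→∞} a_{m+1,n}/a_{m,n} = (1+√5)/2. -/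
theorem fiboquadratic_ratio_tendsto_goldenRatio
    (F : ℤ → ℤ) (h0 : F 0 = 0) (h1 : F 1 = 1)
    (hrec : ∀ k : ℤ, F (k + 1) = F k + F (k - 1))
    (n : ℕ) (hn : 1 ≤ n)
    (a : ℕ → ℝ)
    (haodd : ∀ m : ℕ, Odd m →
      a m = ((F (((m : ℤ) - 1) / 2) : ℝ) * n + (F (((m : ℤ) - 1) / 2 - 1) : ℝ)) *
        ((F (((m : ℤ) + 1) / 2) : ℝ) * n + (F (((m : ℤ) - 1) / 2) : ℝ)))
    (haeven : ∀ m : ℕ, Even m →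
      a m = ((F ((m : ℤ) / 2) : ℝ) * n + (F ((m : ℤ) / 2 - 1) : ℝ)) ^ 2) :
    Filter.Tendsto (fun m : ℕ => a (m + 1) / a m) Filter.atTop
      (nhds ((1 + Real.sqrt 5) / 2)) := by
  have hFneg1 : F (-1) = 1 := by
    have h := hrec 0
    simp [h0, h1] at h
    omega
  set s := Real.sqrt 5 with hs
  have hs2 : s ^ 2 = 5 := Real.sq_sqrt (by norm_num)
  have hspos : 0 < s := Real.sqrt_pos.2 (by norm_num)
  have hs_gt : 2 < s := by nlinarith
  have hs_lt : s < 3 := by nlinarith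
  set φ := (1 + s) / 2 with hφ
  set ψ := (1 - s) / 2 with hψ
  have hφ2 : φ ^ 2 = φ + 1 := by rw [hφ]; nlinarith [hs2]
  have hψ2 : ψ ^ 2 = ψ + 1 := by rw [hψ]; nlinarith [hs2]
  have hφpos : 0 < φ := by rw [hφ]; nlinarith
  have hψneg : ψ < 0 := by rw [hψ]; nlinarith
  have hφne : φ ≠ 0 := ne_of_gt hφpos
  have hn1 : (1 : ℝ) ≤ (n : ℝ) := by exact_mod_cast hn
  -- the sequence b k = F k * n + F (k-1)
  obtain ⟨b, hbdef⟩ : ∃ b : ℕ → ℝ,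
      ∀ k : ℕ, b k = (F (k : ℤ) : ℝ) * n + (F ((k : ℤ) - 1) : ℝ) :=
    ⟨_, fun k => rfl⟩
  have hb0 : b 0 = 1 := by rw [hbdef]; norm_num [h0, hFneg1]
  have hb1 : b 1 = n := by rw [hbdef]; norm_num [h1, h0]
  have hbrec : ∀ k : ℕ, b (k + 2) = b (k + 1) + b k := by
    intro k
    rw [hbdef, hbdef, hbdef]
    push_cast
    rw [show (k : ℤ) + 2 - 1 = (k : ℤ) + 1 by ring,
      show (k : ℤ) + 2 = ((k : ℤ) + 1) + 1 by ring, hrec,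
      show (k : ℤ) + 1 - 1 = (k : ℤ) by ring, hrec (k : ℤ)]
    push_cast
    ring
  have hbpos : ∀ k : ℕ, 1 ≤ b k ∧ 1 ≤ b (k + 1) := by
    intro k
    induction k with
    | zero => exact ⟨by rw [hb0], by rw [hb1]; exact hn1⟩
    | succ k ih => exact ⟨ih.2, by rw [hbrec]; linarith [ih.1, ih.2]⟩
  have hbne : ∀ k : ℕ, b k ≠ 0 := fun k => by linarith [(hbpos k).1]
  -- closed form
  set A := ((n : ℝ) - ψ) / s with hA
  set B := (φ - (n : ℝ)) / s with hB
  have hsne : s ≠ 0 := ne_of_gt hspos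
  have hclosed : ∀ k : ℕ,
      b k = A * φ ^ k + B * ψ ^ k ∧ b (k + 1) = A * φ ^ (k + 1) + B * ψ ^ (k + 1) := by
    intro k
    induction k with
    | zero =>
      constructor
      · rw [hb0, hA, hB, hφ, hψ]
        field_simp
        ring
      · show b 1 = A * φ ^ 1 + B * ψ ^ 1
        rw [hb1, hA, hB, hφ, hψ]
        field_simp
        ring
    | succ k ih =>
      refine ⟨ih.2, ?_⟩
      show b (k + 2) = A * φ ^ (k + 2) + B * ψ ^ (k + 2)
      rw [hbrec, ih.1, ih.2]
      have e1 : φ ^ (k + 2) = φ ^ (k + 1) + φ ^ k := by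
        have h : φ ^ (k + 2) = φ ^ k * φ ^ 2 := by ring
        rw [h, hφ2]; ring
      have e2 : ψ ^ (k + 2) = ψ ^ (k + 1) + ψ ^ k := by
        have h : ψ ^ (k + 2) = ψ ^ k * ψ ^ 2 := by ring
        rw [h, hψ2]; ring
      rw [e1, e2]; ring
  have hApos : 0 < A := by
    apply div_pos _ hspos
    rw [hψ]; nlinarith
  have hAne : A ≠ 0 := ne_of_gt hApos
  -- ratio of b tends to φ
  have hx : |ψ / φ| < 1 := by
    rw [abs_div, abs_of_pos hφpos, abs_of_neg hψneg, div_lt_one hφpos, hψ, hφ]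
    nlinarith
  have hxk : Filter.Tendsto (fun k : ℕ => (ψ / φ) ^ k) Filter.atTop (nhds 0) :=
    tendsto_pow_atTop_nhds_zero_of_abs_lt_one hx
  have hdivk : ∀ k : ℕ, (ψ / φ) ^ k * φ ^ k = ψ ^ k := by
    intro k
    rw [div_pow, div_mul_cancel₀ _ (pow_ne_zero k hφne)]
  have key : ∀ k : ℕ, b k = φ ^ k * (A + B * (ψ / φ) ^ k) := by
    intro k
    rw [(hclosed k).1]
    linear_combination (-B) * hdivk k
  have key' : ∀ k : ℕ, b (k + 1) = φ ^ k * (A * φ + B * ψ * (ψ / φ) ^ k) := by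
    intro k
    rw [(hclosed k).2]
    linear_combination (-B * ψ) * hdivk k
  have hr : Filter.Tendsto (fun k : ℕ => b (k + 1) / b k) Filter.atTop (nhds φ) := by
    have h1 : Filter.Tendsto (fun k : ℕ => A * φ + B * ψ * (ψ / φ) ^ k)
        Filter.atTop (nhds (A * φ)) := by
      have h := (hxk.const_mul (B * ψ)).const_add (A * φ)
      simpa [mul_assoc] using h
    have h2 : Filter.Tendsto (fun k : ℕ => A + B * (ψ / φ) ^ k)
        Filter.atTop (nhds A) := by
      have h := (hxk.const_mul B).const_add A
      simpa using h
    have hlim := h1.div h2 hAne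
    have heq : A * φ / A = φ := by field_simp
    rw [heq] at hlim
    refine hlim.congr ?_
    intro k
    simp only [Pi.div_apply]
    rw [key' k, key k, mul_div_mul_left _ _ (pow_ne_zero k hφne)]
  -- relate a-ratios to b-ratios
  have hratio : ∀ m : ℕ, a (m + 1) / a m = b (m / 2 + 1) / b (m / 2) := by
    intro m
    have hbsucc : ∀ k : ℕ, b (k + 1) = (F ((k : ℤ) + 1) : ℝ) * n + (F (k : ℤ) : ℝ) := by
      intro k
      rw [hbdef]
      push_cast
      rw [show (k : ℤ) + 1 - 1 = (k : ℤ) by ring]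
    rcases Nat.even_or_odd m with he | ho
    · obtain ⟨k, hk⟩ := he
      subst hk
      have e1 : ((k + k : ℕ) : ℤ) / 2 = (k : ℤ) := by push_cast; omega
      have e2 : (((k + k + 1 : ℕ) : ℤ) - 1) / 2 = (k : ℤ) := by push_cast; omega
      have e3 : (((k + k + 1 : ℕ) : ℤ) + 1) / 2 = (k : ℤ) + 1 := by push_cast; omega
      have ha1 : a (k + k) = b k ^ 2 := by
        rw [haeven (k + k) ⟨k, rfl⟩, e1, hbdef]
      have ha2 : a (k + k + 1) = b k * b (k + 1) := by
        rw [haodd (k + k + 1) ⟨k, by omega⟩, e2, e3, hbdef k, hbsucc k]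
      have hm : (k + k) / 2 = k := by omega
      rw [ha1, ha2, hm]
      rw [pow_two]
      rw [mul_comm (b k) (b (k + 1)), mul_div_mul_right _ _ (hbne k)]
    · obtain ⟨k, hk⟩ := ho
      subst hk
      have e2 : (((2 * k + 1 : ℕ) : ℤ) - 1) / 2 = (k : ℤ) := by push_cast; omega
      have e3 : (((2 * k + 1 : ℕ) : ℤ) + 1) / 2 = (k : ℤ) + 1 := by push_cast; omega
      have e1 : ((2 * k + 1 + 1 : ℕ) : ℤ) / 2 = (k : ℤ) + 1 := by push_cast; omega
      have ha1 : a (2 * k + 1) = b k * b (k + 1) := by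
        rw [haodd (2 * k + 1) ⟨k, rfl⟩, e2, e3, hbdef k, hbsucc k]
      have ha2 : a (2 * k + 1 + 1) = b (k + 1) ^ 2 := by
        rw [haeven (2 * k + 1 + 1) ⟨k + 1, by omega⟩, e1, hbdef (k + 1)]
        push_cast
        ring
      have hm : (2 * k + 1) / 2 = k := by omega
      rw [ha1, ha2, hm, pow_two, mul_div_mul_right _ _ (hbne (k + 1))]
  -- assemble
  have hdiv2 : Filter.Tendsto (fun m : ℕ => m / 2) Filter.atTop Filter.atTop :=
    Filter.tendsto_atTop_atTop.2 fun N => ⟨2 * N, fun m hm => by omega⟩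
  have hcomp := hr.comp hdiv2
  refine Filter.Tendsto.congr ?_ hcomp
  intro m
  exact (hratio m).symm
end

section
/- Vajda's formula: for all natural numbers m, k with k ≤ m, F_{m+k+1}·F_{m−k} − F_m·F_{m+1} = (−1)^{m+k+1}·F_k·F_{k+1}. -/
lemma cassini_aux (n : ℕ) :
    (Nat.fib (n+1) : ℤ)^2 - (Nat.fib (n+1) : ℤ) * Nat.fib n - (Nat.fib n : ℤ)^2 = (-1)^n := by
  induction n with
  | zero => simp
  | succ n ih =>
    rw [show n + 1 + 1 = n + 2 by ring, Nat.fib_add_two]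
    push_cast [pow_succ]
    linear_combination -ih

theorem vajda_formula (m k : ℕ) (hk : k ≤ m) :
    (Nat.fib (m + k + 1) : ℤ) * (Nat.fib (m - k) : ℤ) -
      (Nat.fib m : ℤ) * (Nat.fib (m + 1) : ℤ) =
      (-1) ^ (m + k + 1) * (Nat.fib k : ℤ) * (Nat.fib (k + 1) : ℤ) := by
  obtain ⟨n, rfl⟩ := Nat.exists_eq_add_of_le hk
  rw [Nat.add_sub_cancel_left]
  have h1 : (Nat.fib (k + n + k + 1) : ℤ)
      = Nat.fib k * Nat.fib (k+n) + Nat.fib (k+1) * Nat.fib (k+n+1) := by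
    rw [show k+n+k+1 = k + (k+n) + 1 by ring, Nat.fib_add]; push_cast; ring
  have h2 : (Nat.fib (k+n+1) : ℤ) = Nat.fib k * Nat.fib n + Nat.fib (k+1) * Nat.fib (n+1) := by
    rw [Nat.fib_add]; push_cast; ring
  have h3 : (Nat.fib (k+n+2) : ℤ)
      = Nat.fib (k+1) * Nat.fib n + (Nat.fib k + Nat.fib (k+1)) * Nat.fib (n+1) := by
    rw [show k+n+2 = (k+1) + n + 1 by ring, Nat.fib_add, Nat.fib_add_two]; push_cast; ring
  have h4 : (Nat.fib (k+n) : ℤ) = Nat.fib (k+n+2) - Nat.fib (k+n+1) := by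
    rw [Nat.fib_add_two]; push_cast; ring
  have hsign : ((-1 : ℤ)) ^ (k+n+k+1) = -(-1)^n := by
    rw [show k+n+k+1 = n+1 + 2*k by ring, pow_add, pow_mul]
    simp [pow_succ]
  have hc := cassini_aux n
  rw [h1, h4, h3, h2, hsign]
  linear_combination (-(Nat.fib k : ℤ) * Nat.fib (k+1)) * hc
end

section
/- Tagiuri's identity (even case): let (G_m) be a generalized Fibonacci sequence with G_1 = a, G_2 = b and characteristic μ = a² + ab − b². Then for all m, k with 1 ≤ k < m, G_{m+k+1}·G_{m−k} − G_m·G_{m+1} = (−1)^{m+k+1}·μ·F_k·F_{k+1}. -/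
theorem tagiuri_even (a b : ℤ)
    (G : ℕ → ℤ) (hG1 : G 1 = a) (hG2 : G 2 = b)
    (hrec : ∀ m : ℕ, 2 ≤ m → G (m + 1) = G m + G (m - 1)) :
    ∀ m k : ℕ, 1 ≤ k → k < m →
      G (m + k + 1) * G (m - k) - G m * G (m + 1) =
        (-1) ^ (m + k + 1) * (a ^ 2 + a * b - b ^ 2) *
          (Nat.fib k : ℤ) * (Nat.fib (k + 1) : ℤ) := by
  have key : ∀ n : ℕ, 1 ≤ n → ∀ t : ℕ,
      G (n + t + 1) = (Nat.fib t : ℤ) * G n + (Nat.fib (t + 1) : ℤ) * G (n + 1) := by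
    intro n hn t
    induction t using Nat.twoStepInduction with
    | zero => simp
    | one =>
      have h := hrec (n + 1) (by omega)
      simp only [Nat.add_sub_cancel] at h
      show G (n + 1 + 1) = _
      rw [h]
      simp [Nat.fib_one, Nat.fib_two]
      ring
    | more t ih1 ih2 =>
      have h := hrec (n + t + 2) (by omega)
      have e1 : n + (t + 2) + 1 = n + t + 2 + 1 := by ring
      have e2 : n + t + 2 - 1 = n + t + 1 := by omega
      have f2 : (Nat.fib (t + 2) : ℤ) = Nat.fib t + Nat.fib (t + 1) := by
        rw [Nat.fib_add_two]; push_cast; ring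
      have f3 : (Nat.fib (t + 2 + 1) : ℤ) = Nat.fib (t + 1) + Nat.fib (t + 2) := by
        rw [show t + 2 + 1 = t + 1 + 2 from rfl, Nat.fib_add_two]; push_cast; ring
      rw [e1, h, e2, show n + t + 2 = n + (t + 1) + 1 from by omega, ih1, ih2, show t + 1 + 1 = t + 2 from rfl, f3, f2]
      ring
  have En : ∀ n : ℕ, 1 ≤ n →
      G n ^ 2 + G n * G (n + 1) - G (n + 1) ^ 2 = (-1) ^ (n + 1) * (a ^ 2 + a * b - b ^ 2) := by
    intro n hn
    induction n, hn using Nat.le_induction with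
    | base => rw [hG1, hG2]; ring
    | succ n hn ih =>
      have h := hrec (n + 1) (by omega)
      simp only [Nat.add_sub_cancel] at h
      rw [show n + 1 + 1 = n + 2 from rfl] at *
      rw [h]
      have hp : ((-1 : ℤ)) ^ (n + 2) = -(-1) ^ (n + 1) := by rw [pow_succ]; ring
      rw [hp]
      linear_combination -ih
  intro m k hk hm
  obtain ⟨j, rfl⟩ : ∃ j, k = j + 1 := ⟨k - 1, by omega⟩
  set n := m - (j + 1) with hn
  have hn1 : 1 ≤ n := by omega
  have hmk : m - (j + 1) = n := rfl
  have hm1 : m = n + j + 1 := by omega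
  have hG_m : G m = (Nat.fib j : ℤ) * G n + (Nat.fib (j + 1) : ℤ) * G (n + 1) := by
    rw [hm1]; exact key n hn1 j
  have hG_m1 : G (m + 1) = (Nat.fib (j + 1) : ℤ) * G n + (Nat.fib (j + 2) : ℤ) * G (n + 1) := by
    rw [show m + 1 = n + (j + 1) + 1 from by omega]; exact key n hn1 (j + 1)
  have hG_big : G (m + (j + 1) + 1) =
      (Nat.fib (2 * j + 2) : ℤ) * G n + (Nat.fib (2 * j + 3) : ℤ) * G (n + 1) := by
    rw [show m + (j + 1) + 1 = n + (2 * j + 2) + 1 from by omega]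
    exact key n hn1 (2 * j + 2)
  have hf1 : (Nat.fib (2 * j + 2) : ℤ) =
      (Nat.fib j : ℤ) * Nat.fib (j + 1) + (Nat.fib (j + 1) : ℤ) * Nat.fib (j + 2) := by
    have := Nat.fib_add j (j + 1)
    rw [show j + (j + 1) + 1 = 2 * j + 2 from by omega] at this
    exact_mod_cast congrArg (Nat.cast : ℕ → ℤ) this
  have hf2 : (Nat.fib (2 * j + 3) : ℤ) =
      (Nat.fib (j + 1) : ℤ) * Nat.fib (j + 1) + (Nat.fib (j + 2) : ℤ) * Nat.fib (j + 2) := by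
    have := Nat.fib_add (j + 1) (j + 1)
    rw [show j + 1 + (j + 1) + 1 = 2 * j + 3 from by omega] at this
    exact_mod_cast congrArg (Nat.cast : ℕ → ℤ) this
  have hf3 : (Nat.fib (j + 2) : ℤ) = (Nat.fib j : ℤ) + (Nat.fib (j + 1) : ℤ) := by
    rw [Nat.fib_add_two]; push_cast; ring
  have hsign : ((-1 : ℤ)) ^ (m + (j + 1) + 1) = (-1) ^ (n + 1) := by
    rw [show m + (j + 1) + 1 = n + 1 + 2 * (j + 1) from by omega, pow_add, pow_mul]
    simp
  rw [show j + 1 + 1 = j + 2 from rfl, hG_m, hG_m1, hG_big, hf1, hf2, hf3, hsign]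
  have hen := En n hn1
  linear_combination ((Nat.fib (j + 1) : ℤ) * ((Nat.fib j : ℤ) + (Nat.fib (j + 1) : ℤ))) * hen
end
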